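/- Let S be a string, a a character, and w a nonempty string, and suppose (α, β) ∈ Φ_S(w) for characters α, β. If wβ is a prefix of aS, then (α, β) ∉ Φ_{aS}(w); indeed occ_{aS}(wβ) = 2. -/
import Mathlib


variable {Γ : Type*} [DecidableEq Γ]

/-- `occ S w` is the number of occurrences of `w` as a contiguous substring of `S`,
i.e., the number of (0-based) indices `i` with `S[i..i+|w|-1] = w`. -/
def occ (S w : List Γ) : ℕ :=
  ((List.range S.length).filter fun i => (S.drop i).take w.length = w).length

/-- `Phi S w` is the set of pairs `(α, β)` of characters such that
`occ S (αwβ) = occ S (αw) = occ S (wβ) = 1`. -/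
def Phi (S w : List Γ) : Set (Γ × Γ) :=
  {p | occ S (p.1 :: (w ++ [p.2])) = 1 ∧ occ S (p.1 :: w) = 1 ∧ occ S (w ++ [p.2]) = 1}

/-- The net frequency of `w` in `S`. -/
noncomputable def phi (S w : List Γ) : ℕ := (Phi S w).ncard

lemma occ_cons (S : List Γ) (a : Γ) (u : List Γ) :
    occ (a :: S) u = occ S u + (if u <+: (a :: S) then 1 else 0) := by
  unfold occ
  rw [List.length_cons, List.range_succ_eq_map, List.filter_cons, List.filter_map]
  have h2 : ((fun i => decide ((List.drop i (a :: S)).take u.length = u)) ∘ Nat.succ)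
      = fun i => decide ((List.drop i S).take u.length = u) := rfl
  rw [h2]
  have hpre : ((a :: S).take u.length = u) ↔ (u <+: (a :: S)) := by
    constructor
    · intro h; exact h ▸ List.take_prefix _ _
    · intro h; exact (List.prefix_iff_eq_take.mp h).symm
  by_cases h : u <+: (a :: S)
  · rw [if_pos h, if_pos (by simpa using hpre.mpr h)]
    simp [Nat.add_comm]
  · rw [if_neg h, if_neg (by simpa using fun hh => h (hpre.mp hh))]
    simp

/-- If `(α, β) ∈ Phi S w` for a nonempty string `w`, and `w ++ [β]` is a
prefix of `a :: S`, then `(α, β) ∉ Phi (a :: S) w`; indeed `occ (a :: S) (w ++ [β]) = 2`. -/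
theorem stmt13 (S : List Γ) (a : Γ) (w : List Γ) (hw : w ≠ [])
    (α β : Γ) (h : (α, β) ∈ Phi S w) (hpre : (w ++ [β]) <+: (a :: S)) :
    (α, β) ∉ Phi (a :: S) w ∧ occ (a :: S) (w ++ [β]) = 2 := by
  have h2 : occ (a :: S) (w ++ [β]) = 2 := by
    rw [occ_cons, h.2.2, if_pos hpre]
  refine ⟨fun hmem => ?_, h2⟩
  have := hmem.2.2
  rw [h2] at this
  omega
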